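/- Let Q, Q̃, Q₀ be quadratic forms with associated bilinear forms, and let λ̃ > 0 satisfy λ̃Q₀(v) ≤ Q̃(v) for all test functions v. Suppose there exist k, k' > 0 and δ ≥ 0 such that for all n and all test functions u: Q(ω_n u) ≤ k·Q(u, ω_n² u) + k'‖u‖², |Q̃(ω_n u) − Q(ω_n u)| ≤ δ·Q₀(ω_n u), and |Q̃(u, ω_n²u) − Q(u, ω_n²u)| ≤ cδ·Q₀(ω_n u) for some c > 0. If δ(1 + ck) < λ̃, then Q̃(ω_n u) ≤ [k/(1 − λ̃^{−1}(1+ck)δ)]·Q̃(u, ω_n² u) + k̃'‖u‖² for some constant k̃' (one may take k̃' = k'/(1 − λ̃^{−1}(1+ck)δ)). -/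

import Mathlib

/-! The perturbation errors in `Q̃(ω_n u)` and `Q̃(u, ω_n² u)` are both controlled by
`Q₀(ω_n u)`, so property (P_α) for `Q` transfers to `Q̃` up to an error `(1 + c k) δ Q₀(ω_n u)`.
Coercivity `λ̃ Q₀ ≤ Q̃` bounds this error by `λ̃⁻¹ (1 + c k) δ Q̃(ω_n u)`, which is absorbed
into the left-hand side as long as `δ (1 + c k) < λ̃`. -/

section

variable {𝕜 : Type*} [Field 𝕜] [LinearOrder 𝕜] [IsStrictOrderedRing 𝕜]

theorem le_add_of_perturbation {a b a' b' q r k δ c : 𝕜} (hk : 0 ≤ k)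
    (hab : a ≤ k * b + r) (ha : |a' - a| ≤ δ * q) (hb : |b' - b| ≤ c * δ * q) :
    a' ≤ k * b' + r + (1 + c * k) * δ * q := by
  have ha' : a' ≤ a + δ * q := by linarith [(abs_le.mp ha).2]
  have hb' : k * b ≤ k * (b' + c * δ * q) :=
    mul_le_mul_of_nonneg_left (by linarith [(abs_le.mp hb).1]) hk
  linarith

theorem le_div_of_le_add_of_coercive {a r s q lam : 𝕜} (hlam : 0 < lam)
    (hs : 0 ≤ s) (hslam : s < lam) (ha : a ≤ r + s * q) (hcoercive : lam * q ≤ a) :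
    a ≤ r / (1 - lam⁻¹ * s) := by
  have hε : 0 < 1 - lam⁻¹ * s := by
    rw [sub_pos, inv_mul_lt_one₀ hlam]
    exact hslam
  have hq : s * q ≤ lam⁻¹ * s * a := by
    rw [mul_comm lam⁻¹, mul_assoc, ← div_eq_inv_mul]
    exact mul_le_mul_of_nonneg_left ((le_div_iff₀' hlam).mpr hcoercive) hs
  rw [le_div_iff₀ hε]
  linarith

end

theorem stmt_9_general (V : Type*) (norm2 : V → ℝ)
    -- `QA n u` stands for `Q(ω_n u)`, `QB n u` for `Q(u, ω_n² u)`,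
    -- `QA' n u` for `Q̃(ω_n u)`, `QB' n u` for `Q̃(u, ω_n² u)`,
    -- and `Q0 n u` for `Q₀(ω_n u)`.
    (QA QB QA' QB' Q0 : ℕ → V → ℝ)
    (lam' : ℝ) (hlam' : 0 < lam')
    (hcoercive : ∀ n u, lam' * Q0 n u ≤ QA' n u)
    (k k' : ℝ) (hk : 0 < k) (δ : ℝ) (hδ : 0 ≤ δ) (c : ℝ) (hc : 0 < c)
    (hP : ∀ n u, QA n u ≤ k * QB n u + k' * norm2 u)
    (hpert : ∀ n u, |QA' n u - QA n u| ≤ δ * Q0 n u)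
    (hpert' : ∀ n u, |QB' n u - QB n u| ≤ c * δ * Q0 n u)
    (hsmall : δ * (1 + c * k) < lam') :
    ∀ n u, QA' n u ≤ (k / (1 - lam'⁻¹ * (1 + c * k) * δ)) * QB' n u +
      (k' / (1 - lam'⁻¹ * (1 + c * k) * δ)) * norm2 u := by
  intro n u
  have hbound := le_add_of_perturbation hk.le (hP n u) (hpert n u) (hpert' n u)
  have habsorb := le_div_of_le_add_of_coercive hlam' (by positivity)
    (by rwa [mul_comm] at hsmall) hbound (hcoercive n u)
  rwa [mul_assoc, div_mul_eq_mul_div, div_mul_eq_mul_div, ← add_div]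

theorem stmt_9 (V : Type*) (norm2 : V → ℝ)
    -- `QA n u` stands for `Q(ω_n u)`, `QB n u` for `Q(u, ω_n² u)`,
    -- `QA' n u` for `Q̃(ω_n u)`, `QB' n u` for `Q̃(u, ω_n² u)`,
    -- and `Q0 n u` for `Q₀(ω_n u)`.
    (QA QB QA' QB' Q0 : ℕ → V → ℝ)
    (lam' : ℝ) (hlam' : 0 < lam')
    (hQ0nonneg : ∀ n u, 0 ≤ Q0 n u)
    (hcoercive : ∀ n u, lam' * Q0 n u ≤ QA' n u)
    (k k' : ℝ) (hk : 0 < k) (hk' : 0 < k') (δ : ℝ) (hδ : 0 ≤ δ) (c : ℝ) (hc : 0 < c)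
    (hP : ∀ n u, QA n u ≤ k * QB n u + k' * norm2 u)
    (hpert : ∀ n u, |QA' n u - QA n u| ≤ δ * Q0 n u)
    (hpert' : ∀ n u, |QB' n u - QB n u| ≤ c * δ * Q0 n u)
    (hsmall : δ * (1 + c * k) < lam') :
    ∀ n u, QA' n u ≤ (k / (1 - lam'⁻¹ * (1 + c * k) * δ)) * QB' n u +
      (k' / (1 - lam'⁻¹ * (1 + c * k) * δ)) * norm2 u :=
  stmt_9_general V norm2 QA QB QA' QB' Q0 lam' hlam' hcoercive k k' hk δ hδ c hc hP hpert hpert'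
    hsmall
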